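/- Let κ ∈ ℝ and suppose (c₁,c₂) ∈ ℝ × [0,∞) satisfies ∂₁F_κ(c₁,c₂) = 0. Then ∂₂F_κ(c₁,c₂) ≤ inf_{c ∈ ℝ} F₀(c,1), where F₀ is F_κ with κ = 0. -/

import Mathlib

/-!
`F_κ(c₁, c₂)` is the `L²` norm of `(κ − c₁·Y·G − c₂·Z)₊`, so it is subadditive and positively
homogeneous in `(κ, c₁, c₂)`. Writing `(c₁, c₂ + h)` as the midpoint of `(c₁ + 2hc, c₂ + 2h)` and
`(c₁ − 2hc, c₂)`, and bounding `F_κ(c₁ + 2hc, c₂ + 2h) ≤ F_κ(c₁, c₂) + 2h·F₀(c, 1)`, the right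
difference quotient of `F_κ` in `c₂` is at most `F₀(c, 1)` plus a difference quotient in `c₁`, which
tends to `∂₁F_κ(c₁, c₂) = 0`. This limit is meaningful because for `c₂ ≠ 0` the integrand is
positive on an open set, so `F_κ` is differentiable in `c₁`; for `c₂ = 0`, `F_κ` is even in `c₂`,
so `∂₂F_κ(c₁, 0) = 0`.
-/

open MeasureTheory ProbabilityTheory Real Filter Set Topology

noncomputable section

namespace MaxMargin

/-- The standard Gaussian measure on `ℝ`. -/
def stdG : Measure ℝ := gaussianReal 0 1

/-- The function `F_κ(c₁,c₂) = (E[((κ − c₁·Y·G − c₂·Z)₊)²])^{1/2}` where `G, Z` are independent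
standard Gaussians and, conditionally on `G`, `Y ∈ {+1,−1}` with `P(Y = +1 | G) = f(G)`. -/
def Fk (f : ℝ → ℝ) (κ c₁ c₂ : ℝ) : ℝ :=
  Real.sqrt (∫ g, ∫ z,
    (f g * (max (κ - c₁ * g - c₂ * z) 0) ^ 2
      + (1 - f g) * (max (κ + c₁ * g - c₂ * z) 0) ^ 2) ∂stdG ∂stdG)

/-- Non-degeneracy of `f`: the variable `T = Y·G` satisfies `P(T < x) > 0` and `P(T > x) > 0`
for every `x ∈ ℝ`. -/
def NonDeg (f : ℝ → ℝ) : Prop :=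
  ∀ x : ℝ,
    (0 < ∫ g, (f g * (if g < x then (1:ℝ) else 0)
          + (1 - f g) * (if -g < x then (1:ℝ) else 0)) ∂stdG) ∧
    (0 < ∫ g, (f g * (if x < g then (1:ℝ) else 0)
          + (1 - f g) * (if x < -g then (1:ℝ) else 0)) ∂stdG)


/-- Partial derivative of `F_κ` in its first argument. -/
def d1F (f : ℝ → ℝ) (κ c₁ c₂ : ℝ) : ℝ := deriv (fun t => Fk f κ t c₂) c₁

/-- Partial derivative of `F_κ` in its second argument. -/
def d2F (f : ℝ → ℝ) (κ c₁ c₂ : ℝ) : ℝ := deriv (fun t => Fk f κ c₁ t) c₂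


theorem sqrt_le_sqrt_add_sqrt_of_forall {S A B : ℝ} (hA : 0 ≤ A) (hB : 0 ≤ B)
    (h : ∀ ε > 0, S ≤ (1 + ε) * A + (1 + ε⁻¹) * B) : √S ≤ √A + √B := by
  set a := √A
  set b := √B
  have ha : 0 ≤ a := Real.sqrt_nonneg A
  have hb : 0 ≤ b := Real.sqrt_nonneg B
  -- `ε = (b + t) / (a + t)` is the optimal choice `b / a`, perturbed to avoid dividing by zero
  have hS : ∀ t > 0, S ≤ (a + b + 2 * t) * (a + b) := by
    intro t ht
    have hat : 0 < a + t := by positivity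
    have hbt : 0 < b + t := by positivity
    calc S ≤ (1 + (b + t) / (a + t)) * a ^ 2 + (1 + ((b + t) / (a + t))⁻¹) * b ^ 2 := by
          rw [Real.sq_sqrt hA, Real.sq_sqrt hB]; exact h _ (by positivity)
      _ = (a + b + 2 * t) * (a ^ 2 / (a + t) + b ^ 2 / (b + t)) := by
          field_simp; ring
      _ ≤ (a + b + 2 * t) * (a + b) := by
          gcongr
          · rw [div_le_iff₀ hat]; nlinarith
          · rw [div_le_iff₀ hbt]; nlinarith
  have hlim : Tendsto (fun t : ℝ => (a + b + 2 * t) * (a + b)) (𝓝[>] 0) (𝓝 ((a + b) ^ 2)) := by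
    exact (Continuous.tendsto' (by fun_prop) 0 _ (by ring)).mono_left nhdsWithin_le_nhds
  have hS' : S ≤ (a + b) ^ 2 :=
    ge_of_tendsto hlim (eventually_mem_nhdsWithin.mono fun t ht => hS t ht)
  exact Real.sqrt_le_iff.2 ⟨by positivity, hS'⟩

theorem hasDerivAt_max_zero_sq (x : ℝ) :
    HasDerivAt (fun y : ℝ => max y 0 ^ 2) (2 * max x 0) x := by
  refine hasDerivAt_of_hasDerivAt_of_ne' (f := fun y : ℝ => max y 0 ^ 2) (g := fun y => 2 * max y 0)
    (x := 0) (fun y hy => ?_) (by fun_prop) (by fun_prop) x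
  rcases hy.lt_or_gt with hy | hy
  · have hzero : (fun y : ℝ => max y 0 ^ 2) =ᶠ[𝓝 y] fun _ => 0 :=
      (gt_mem_nhds hy).mono fun z hz => by simp [max_eq_right hz.le]
    simpa [max_eq_right hy.le] using (hasDerivAt_const y (0 : ℝ)).congr_of_eventuallyEq hzero
  · have hsq : (fun y : ℝ => max y 0 ^ 2) =ᶠ[𝓝 y] fun z => z ^ 2 :=
      (lt_mem_nhds hy).mono fun z hz => by simp [max_eq_left hz.le]
    simpa [max_eq_left hy.le] using (hasDerivAt_pow 2 y).congr_of_eventuallyEq hsq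

theorem deriv_zero_of_even {g : ℝ → ℝ} (hg : ∀ x, g (-x) = g x) : deriv g 0 = 0 := by
  have h := deriv_comp_neg (f := g) (x := 0)
  simp only [hg, neg_zero] at h
  linarith

theorem le_of_hasDerivAt_of_sub_le {φ ψ : ℝ → ℝ} {x y v D M : ℝ} (hφ : HasDerivAt φ 0 x)
    (hψ : HasDerivAt ψ D y)
    (hle : ∀ h > 0, ψ (y + h) - ψ y ≤ h * M + (φ (x + h * v) - φ x)) : D ≤ M := by
  have hline : HasDerivAt (fun h => φ (x + h * v)) 0 0 := by
    have hφ' : HasDerivAt φ 0 (x + 0 * v) := by simpa using hφ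
    simpa [Function.comp_def] using hφ'.comp (0 : ℝ) ((hasDerivAt_mul_const v).const_add x)
  have hlim := hψ.tendsto_slope_zero_right.sub hline.tendsto_slope_zero_right
  simp only [zero_add, zero_mul, add_zero, sub_zero, smul_eq_mul] at hlim
  refine le_of_tendsto hlim (eventually_mem_nhdsWithin.mono fun h (hh : 0 < h) => ?_)
  rw [← mul_sub, inv_mul_le_iff₀ hh]
  linarith [hle h hh]

instance : IsProbabilityMeasure stdG := by unfold stdG; infer_instance

theorem integrable_one_add_sq_add_sq :
    Integrable (fun p : ℝ × ℝ => 1 + p.1 ^ 2 + p.2 ^ 2) (stdG.prod stdG) := by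
  have hsq : Integrable (fun x : ℝ => x ^ 2) stdG := (memLp_id_gaussianReal 2).integrable_sq
  exact ((integrable_const 1).add (hsq.comp_fst stdG)).add (hsq.comp_snd stdG)

theorem max_sub_sub_zero_le (κ a b g z : ℝ) :
    max (κ - a * g - b * z) 0 ≤ |κ| + |a| * |g| + |b| * |z| := by
  refine max_le ?_ (by positivity)
  calc κ - a * g - b * z ≤ |κ - a * g - b * z| := le_abs_self _
    _ ≤ |κ - a * g| + |b * z| := abs_sub _ _
    _ ≤ |κ| + |a * g| + |b * z| := by gcongr; exact abs_sub _ _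
    _ = |κ| + |a| * |g| + |b| * |z| := by rw [abs_mul, abs_mul]

theorem max_add_zero_sq_le {ε : ℝ} (hε : 0 < ε) (x x' : ℝ) :
    max (x + x') 0 ^ 2 ≤ (1 + ε) * max x 0 ^ 2 + (1 + ε⁻¹) * max x' 0 ^ 2 := by
  set u := max x 0
  set u' := max x' 0
  have hsub : max (x + x') 0 ≤ u + u' :=
    max_le (add_le_add (le_max_left _ _) (le_max_left _ _)) (by positivity)
  calc max (x + x') 0 ^ 2 ≤ (u + u') ^ 2 := by gcongr
    _ ≤ (1 + ε) * u ^ 2 + (1 + ε⁻¹) * u' ^ 2 := by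
      nlinarith [mul_inv_cancel₀ hε.ne', mul_nonneg (inv_nonneg.2 hε.le) (sq_nonneg (ε * u - u'))]

/-- The integrand of `Fk f κ a b` at `(G, Z) = p`, the expectation over the label `Y` taken. -/
def marginLoss (f : ℝ → ℝ) (κ a b : ℝ) (p : ℝ × ℝ) : ℝ :=
  f p.1 * max (κ - a * p.1 - b * p.2) 0 ^ 2 + (1 - f p.1) * max (κ + a * p.1 - b * p.2) 0 ^ 2

section marginLoss

variable {f : ℝ → ℝ}

theorem continuous_marginLoss (hf : Continuous f) (κ a b : ℝ) :
    Continuous (marginLoss f κ a b) := by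
  unfold marginLoss; fun_prop

theorem marginLoss_nonneg (hf01 : ∀ x, f x ∈ Icc (0 : ℝ) 1) (κ a b : ℝ) (p : ℝ × ℝ) :
    0 ≤ marginLoss f κ a b p := by
  obtain ⟨hf0, hf1⟩ := hf01 p.1
  unfold marginLoss
  exact add_nonneg (mul_nonneg hf0 (sq_nonneg _)) (mul_nonneg (sub_nonneg.2 hf1) (sq_nonneg _))

theorem marginLoss_le (hf01 : ∀ x, f x ∈ Icc (0 : ℝ) 1) (κ a b : ℝ) (p : ℝ × ℝ) :
    marginLoss f κ a b p ≤ 3 * (κ ^ 2 + a ^ 2 + b ^ 2) * (1 + p.1 ^ 2 + p.2 ^ 2) := by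
  obtain ⟨hf0, hf1⟩ := hf01 p.1
  set M := |κ| + |a| * |p.1| + |b| * |p.2|
  have hu : max (κ - a * p.1 - b * p.2) 0 ^ 2 ≤ M ^ 2 :=
    pow_le_pow_left₀ (le_max_right _ _) (max_sub_sub_zero_le κ a b p.1 p.2) 2
  have hv : max (κ + a * p.1 - b * p.2) 0 ^ 2 ≤ M ^ 2 :=
    pow_le_pow_left₀ (le_max_right _ _) (by simpa using max_sub_sub_zero_le κ (-a) b p.1 p.2) 2
  have hM : M ^ 2 ≤ 3 * (κ ^ 2 + a ^ 2 + b ^ 2) * (1 + p.1 ^ 2 + p.2 ^ 2) := by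
    simp only [M, ← sq_abs κ, ← sq_abs a, ← sq_abs b, ← sq_abs p.1, ← sq_abs p.2]
    nlinarith [sq_nonneg (|κ| - |a| * |p.1|), sq_nonneg (|κ| - |b| * |p.2|),
      sq_nonneg (|a| * |p.1| - |b| * |p.2|), mul_nonneg (sq_nonneg |κ|) (sq_nonneg |p.1|),
      mul_nonneg (sq_nonneg |κ|) (sq_nonneg |p.2|), mul_nonneg (sq_nonneg |a|) (sq_nonneg |p.2|),
      mul_nonneg (sq_nonneg |b|) (sq_nonneg |p.1|), sq_nonneg |a|, sq_nonneg |b|]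
  unfold marginLoss
  nlinarith [mul_le_mul_of_nonneg_left hu hf0, mul_le_mul_of_nonneg_left hv (sub_nonneg.2 hf1)]

theorem integrable_marginLoss (hf : Continuous f) (hf01 : ∀ x, f x ∈ Icc (0 : ℝ) 1)
    (κ a b : ℝ) : Integrable (marginLoss f κ a b) (stdG.prod stdG) := by
  refine (integrable_one_add_sq_add_sq.const_mul (3 * (κ ^ 2 + a ^ 2 + b ^ 2))).mono'
    (continuous_marginLoss hf κ a b).aestronglyMeasurable (ae_of_all _ fun p => ?_)
  rw [Real.norm_of_nonneg (marginLoss_nonneg hf01 κ a b p)]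
  exact marginLoss_le hf01 κ a b p

theorem Fk_eq_sqrt_integral (hf : Continuous f) (hf01 : ∀ x, f x ∈ Icc (0 : ℝ) 1)
    (κ a b : ℝ) : Fk f κ a b = √(∫ p, marginLoss f κ a b p ∂(stdG.prod stdG)) := by
  rw [integral_prod _ (integrable_marginLoss hf hf01 κ a b)]
  rfl

theorem marginLoss_add_le (hf01 : ∀ x, f x ∈ Icc (0 : ℝ) 1) {ε : ℝ} (hε : 0 < ε)
    (κ a b κ' a' b' : ℝ) (p : ℝ × ℝ) :
    marginLoss f (κ + κ') (a + a') (b + b') p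
      ≤ (1 + ε) * marginLoss f κ a b p + (1 + ε⁻¹) * marginLoss f κ' a' b' p := by
  obtain ⟨hf0, hf1⟩ := hf01 p.1
  have e₁ : κ + κ' - (a + a') * p.1 - (b + b') * p.2
      = (κ - a * p.1 - b * p.2) + (κ' - a' * p.1 - b' * p.2) := by ring
  have e₂ : κ + κ' + (a + a') * p.1 - (b + b') * p.2
      = (κ + a * p.1 - b * p.2) + (κ' + a' * p.1 - b' * p.2) := by ring
  unfold marginLoss
  rw [e₁, e₂]
  have h₁ := mul_le_mul_of_nonneg_left
    (max_add_zero_sq_le hε (κ - a * p.1 - b * p.2) (κ' - a' * p.1 - b' * p.2)) hf0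
  have h₂ := mul_le_mul_of_nonneg_left
    (max_add_zero_sq_le hε (κ + a * p.1 - b * p.2) (κ' + a' * p.1 - b' * p.2)) (sub_nonneg.2 hf1)
  linarith

theorem Fk_add_le (hf : Continuous f) (hf01 : ∀ x, f x ∈ Icc (0 : ℝ) 1) (κ a b κ' a' b' : ℝ) :
    Fk f (κ + κ') (a + a') (b + b') ≤ Fk f κ a b + Fk f κ' a' b' := by
  simp only [Fk_eq_sqrt_integral hf hf01]
  have hint := integrable_marginLoss hf hf01
  refine sqrt_le_sqrt_add_sqrt_of_forall
    (integral_nonneg (marginLoss_nonneg hf01 κ a b))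
    (integral_nonneg (marginLoss_nonneg hf01 κ' a' b')) fun ε hε => ?_
  rw [← integral_const_mul, ← integral_const_mul,
    ← integral_add ((hint κ a b).const_mul _) ((hint κ' a' b').const_mul _)]
  exact integral_mono (hint _ _ _) (((hint κ a b).const_mul _).add ((hint κ' a' b').const_mul _))
    (marginLoss_add_le hf01 hε κ a b κ' a' b')

theorem Fk_smul {l : ℝ} (hl : 0 ≤ l) (κ a b : ℝ) :
    Fk f (l * κ) (l * a) (l * b) = l * Fk f κ a b := by
  have hmax : ∀ x, max (l * x) 0 ^ 2 = l ^ 2 * max x 0 ^ 2 := fun x => by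
    have h := mul_max_of_nonneg x 0 hl
    rw [mul_zero] at h
    rw [← h, mul_pow]
  have e₁ : ∀ g z, l * κ - l * a * g - l * b * z = l * (κ - a * g - b * z) := by intros; ring
  have e₂ : ∀ g z, l * κ + l * a * g - l * b * z = l * (κ + a * g - b * z) := by intros; ring
  simp only [Fk, e₁, e₂, hmax]
  simp only [mul_left_comm _ (l ^ 2), ← mul_add, integral_const_mul]
  rw [Real.sqrt_mul (sq_nonneg l), Real.sqrt_sq hl]

theorem Fk_neg_right (κ a b : ℝ) : Fk f κ a (-b) = Fk f κ a b := by
  have hneg : MeasurePreserving (MeasurableEquiv.neg ℝ) stdG stdG :=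
    ⟨measurable_neg, by simpa [stdG] using gaussianReal_map_neg (μ := 0) (v := 1)⟩
  unfold Fk
  congr 1
  refine integral_congr_ae (ae_of_all _ fun g => ?_)
  simpa using hneg.integral_comp'
    fun z => f g * max (κ - a * g - b * z) 0 ^ 2 + (1 - f g) * max (κ + a * g - b * z) 0 ^ 2

end marginLoss

def marginLossDeriv (f : ℝ → ℝ) (κ a b : ℝ) (p : ℝ × ℝ) : ℝ :=
  2 * p.1 * ((1 - f p.1) * max (κ + a * p.1 - b * p.2) 0 - f p.1 * max (κ - a * p.1 - b * p.2) 0)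

section differentiability

variable {f : ℝ → ℝ}

theorem integral_marginLoss_pos (hf : Continuous f) (hf01 : ∀ x, f x ∈ Icc (0 : ℝ) 1)
    (κ a : ℝ) {b : ℝ} (hb : b ≠ 0) : 0 < ∫ p, marginLoss f κ a b p ∂(stdG.prod stdG) := by
  have : stdG.IsOpenPosMeasure :=
    (gaussianReal_absolutelyContinuous' 0 one_ne_zero).isOpenPosMeasure
  rw [integral_pos_iff_support_of_nonneg (marginLoss_nonneg hf01 κ a b)
    (integrable_marginLoss hf hf01 κ a b)]
  set U := {p : ℝ × ℝ | 0 < κ - a * p.1 - b * p.2} ∩ {p | 0 < κ + a * p.1 - b * p.2}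
  have hU : IsOpen U :=
    (isOpen_lt continuous_const (by fun_prop)).inter (isOpen_lt continuous_const (by fun_prop))
  have hUne : U.Nonempty := ⟨(0, (κ - 1) / b), by simp [U, mul_div_cancel₀ _ hb]⟩
  have hsupp : U ⊆ Function.support (marginLoss f κ a b) := by
    rintro p ⟨hu, hv⟩
    obtain ⟨hf0, hf1⟩ := hf01 p.1
    set m := min (max (κ - a * p.1 - b * p.2) 0 ^ 2) (max (κ + a * p.1 - b * p.2) 0 ^ 2)
    have hm : 0 < m := lt_min (pow_pos (lt_max_of_lt_left hu) 2) (pow_pos (lt_max_of_lt_left hv) 2)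
    refine (hm.trans_le ?_).ne'
    calc m = f p.1 * m + (1 - f p.1) * m := by ring
      _ ≤ marginLoss f κ a b p :=
        add_le_add (mul_le_mul_of_nonneg_left (min_le_left _ _) hf0)
          (mul_le_mul_of_nonneg_left (min_le_right _ _) (sub_nonneg.2 hf1))
  exact (hU.measure_pos _ hUne).trans_le (measure_mono hsupp)

theorem hasDerivAt_marginLoss (κ b : ℝ) (p : ℝ × ℝ) (a : ℝ) :
    HasDerivAt (fun t => marginLoss f κ t b p) (marginLossDeriv f κ a b p) a := by
  have h₁ := (hasDerivAt_max_zero_sq _).comp a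
    (((hasDerivAt_mul_const p.1).const_sub κ).sub_const (b * p.2))
  have h₂ := (hasDerivAt_max_zero_sq _).comp a
    (((hasDerivAt_mul_const p.1).const_add κ).sub_const (b * p.2))
  exact ((h₁.const_mul (f p.1)).add (h₂.const_mul (1 - f p.1))).congr_deriv
    (by unfold marginLossDeriv; ring)

theorem abs_marginLossDeriv_le (hf01 : ∀ x, f x ∈ Icc (0 : ℝ) 1) (κ a b : ℝ) (p : ℝ × ℝ) :
    |marginLossDeriv f κ a b p| ≤ 2 * (|κ| + |a| + |b|) * (1 + p.1 ^ 2 + p.2 ^ 2) := by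
  obtain ⟨hf0, hf1⟩ := hf01 p.1
  set M := |κ| + |a| * |p.1| + |b| * |p.2|
  have hu := max_sub_sub_zero_le κ a b p.1 p.2
  have hv : max (κ + a * p.1 - b * p.2) 0 ≤ M := by simpa using max_sub_sub_zero_le κ (-a) b p.1 p.2
  have hdiff : |(1 - f p.1) * max (κ + a * p.1 - b * p.2) 0 - f p.1 * max (κ - a * p.1 - b * p.2) 0|
      ≤ M := by
    rw [abs_le]
    constructor <;>
      nlinarith [le_max_right (κ - a * p.1 - b * p.2) 0, le_max_right (κ + a * p.1 - b * p.2) 0]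
  have hM : 2 * |p.1| * M ≤ 2 * (|κ| + |a| + |b|) * (1 + p.1 ^ 2 + p.2 ^ 2) := by
    simp only [M, ← sq_abs p.1, ← sq_abs p.2]
    nlinarith [mul_nonneg (abs_nonneg κ) (sq_nonneg (|p.1| - 1)),
      mul_nonneg (abs_nonneg b) (sq_nonneg (|p.1| - |p.2|)),
      mul_nonneg (abs_nonneg a) (sq_nonneg |p.2|), abs_nonneg a, abs_nonneg κ, abs_nonneg b]
  calc |marginLossDeriv f κ a b p| ≤ 2 * |p.1| * M := by
        rw [marginLossDeriv, abs_mul, abs_mul, abs_two]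
        gcongr
    _ ≤ _ := hM

theorem hasDerivAt_integral_marginLoss (hf : Continuous f) (hf01 : ∀ x, f x ∈ Icc (0 : ℝ) 1)
    (κ b a : ℝ) :
    HasDerivAt (fun t => ∫ p, marginLoss f κ t b p ∂(stdG.prod stdG))
      (∫ p, marginLossDeriv f κ a b p ∂(stdG.prod stdG)) a := by
  have hbound : ∀ p : ℝ × ℝ, ∀ t ∈ Metric.ball a 1, ‖marginLossDeriv f κ t b p‖
      ≤ 2 * (|κ| + (|a| + 1) + |b|) * (1 + p.1 ^ 2 + p.2 ^ 2) := by
    intro p t ht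
    have hta : |t| ≤ |a| + 1 := by
      have := abs_sub_abs_le_abs_sub t a
      rw [Metric.mem_ball, Real.dist_eq] at ht
      linarith
    refine (abs_marginLossDeriv_le hf01 κ t b p).trans ?_
    gcongr
  refine (hasDerivAt_integral_of_dominated_loc_of_deriv_le (Metric.ball_mem_nhds a one_pos)
    (Eventually.of_forall fun t => (continuous_marginLoss hf κ t b).aestronglyMeasurable)
    (integrable_marginLoss hf hf01 κ a b)
    (by unfold marginLossDeriv; fun_prop : Continuous (marginLossDeriv f κ a b)).aestronglyMeasurable
    (ae_of_all _ hbound) (integrable_one_add_sq_add_sq.const_mul _)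
    (ae_of_all _ fun p t _ => hasDerivAt_marginLoss κ b p t)).2

theorem differentiableAt_Fk_left (hf : Continuous f) (hf01 : ∀ x, f x ∈ Icc (0 : ℝ) 1)
    (κ a : ℝ) {b : ℝ} (hb : b ≠ 0) : DifferentiableAt ℝ (fun t => Fk f κ t b) a := by
  simp only [Fk_eq_sqrt_integral hf hf01]
  exact ((hasDerivAt_integral_marginLoss hf hf01 κ b a).sqrt
    (integral_marginLoss_pos hf hf01 κ a hb).ne').differentiableAt

end differentiability

theorem Fk_add_right_le {f : ℝ → ℝ} (hf : Continuous f) (hf01 : ∀ x, f x ∈ Icc (0 : ℝ) 1)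
    (κ c₁ c₂ c : ℝ) {h : ℝ} (hh : 0 ≤ h) :
    Fk f κ c₁ (c₂ + h) ≤ (Fk f κ c₁ c₂ + Fk f κ (c₁ - 2 * h * c) c₂) / 2 + h * Fk f 0 c 1 := by
  have hstep : Fk f κ (c₁ + 2 * h * c) (c₂ + 2 * h) ≤ Fk f κ c₁ c₂ + 2 * h * Fk f 0 c 1 := by
    have hscale := Fk_smul (f := f) (by positivity : 0 ≤ 2 * h) 0 c 1
    rw [mul_zero, mul_one] at hscale
    simpa [hscale] using Fk_add_le hf hf01 κ c₁ c₂ 0 (2 * h * c) (2 * h)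
  calc Fk f κ c₁ (c₂ + h)
      = Fk f (1 / 2 * κ + 1 / 2 * κ) (1 / 2 * (c₁ + 2 * h * c) + 1 / 2 * (c₁ - 2 * h * c))
          (1 / 2 * (c₂ + 2 * h) + 1 / 2 * c₂) := by congr 1 <;> ring
    _ ≤ Fk f (1 / 2 * κ) (1 / 2 * (c₁ + 2 * h * c)) (1 / 2 * (c₂ + 2 * h))
          + Fk f (1 / 2 * κ) (1 / 2 * (c₁ - 2 * h * c)) (1 / 2 * c₂) := Fk_add_le hf hf01 ..
    _ = (Fk f κ (c₁ + 2 * h * c) (c₂ + 2 * h) + Fk f κ (c₁ - 2 * h * c) c₂) / 2 := by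
          rw [Fk_smul (by norm_num), Fk_smul (by norm_num)]; ring
    _ ≤ _ := by linarith

theorem statement_1_general (f : ℝ → ℝ) (hf : Continuous f) (hf01 : ∀ x, f x ∈ Set.Icc (0:ℝ) 1)
    (κ c₁ c₂ : ℝ)
    (h : d1F f κ c₁ c₂ = 0) :
    d2F f κ c₁ c₂ ≤ ⨅ c : ℝ, Fk f 0 c 1 := by
  refine le_ciInf fun c => ?_
  by_cases hψ : DifferentiableAt ℝ (fun t => Fk f κ c₁ t) c₂
  swap
  · rw [d2F, deriv_zero_of_not_differentiableAt hψ]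
    exact Real.sqrt_nonneg _
  rcases eq_or_ne c₂ 0 with rfl | hc₂
  · rw [d2F, deriv_zero_of_even fun t => Fk_neg_right κ c₁ t]
    exact Real.sqrt_nonneg _
  have hφ : HasDerivAt (fun t => Fk f κ t c₂ / 2) 0 c₁ := by
    have hd := (differentiableAt_Fk_left hf hf01 κ c₁ hc₂).hasDerivAt.div_const 2
    rwa [show deriv (fun t => Fk f κ t c₂) c₁ = 0 from h, zero_div] at hd
  refine le_of_hasDerivAt_of_sub_le hφ hψ.hasDerivAt (v := -2 * c) fun t ht => ?_
  rw [show c₁ + t * (-2 * c) = c₁ - 2 * t * c by ring]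
  linarith [Fk_add_right_le hf hf01 κ c₁ c₂ c ht.le]

/-- If `∂₁F_κ(c₁,c₂) = 0` at some `(c₁,c₂) ∈ ℝ × [0,∞)`, then
`∂₂F_κ(c₁,c₂) ≤ inf_{c ∈ ℝ} F₀(c,1)`. -/
theorem statement_1 (f : ℝ → ℝ) (hf : Continuous f) (hf01 : ∀ x, f x ∈ Set.Icc (0:ℝ) 1)
    (hnd : NonDeg f) (κ c₁ c₂ : ℝ) (hc₂ : 0 ≤ c₂)
    (h : d1F f κ c₁ c₂ = 0) :
    d2F f κ c₁ c₂ ≤ ⨅ c : ℝ, Fk f 0 c 1 :=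
  statement_1_general f hf hf01 κ c₁ c₂ h

end MaxMargin
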